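/- Suppose 4n/11 < s < 3n/8 and G is a triangle-free graph on n vertices with α(G) = s and exactly 6n² - 32ns + 44s² edges (i.e., G is extremal assuming ex(n,s) = g_4(n,s)). If G contains a Γ_3-mould, then e(G) ≤ 6n² - 32ns + 44s². -/
import Mathlib


open SimpleGraph

open scoped Classical in
/-- An independent set in a graph, as a finset. -/
def IsIndep {V : Type*} (G : SimpleGraph V) (t : Finset V) : Prop :=
  ∀ x ∈ t, ∀ y ∈ t, x ≠ y → ¬ G.Adj x y

open scoped Classical in
/-- `ex n s`: the maximum number of edges of a triangle-free graph on `n`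
vertices whose independence number is at most `s`. -/
noncomputable def exRT (n s : ℕ) : ℕ :=
  sSup {m | ∃ G : SimpleGraph (Fin n), G.CliqueFree 3 ∧
    (∀ t : Finset (Fin n), IsIndep G t → t.card ≤ s) ∧ G.edgeFinset.card = m}

/-- The Andrásfai graph `Γ_k`: the Cayley graph on `ZMod (3k-1)` with connection
set `{k, k+1, ..., 2k-1}`; `Γ_3` is the Wagner graph on `ZMod 8` with connection
set `{3,4,5}`. -/
def andrasfai (k : ℕ) : SimpleGraph (ZMod (3 * k - 1)) :=
  SimpleGraph.fromRel
    (fun i j => ∃ d : ℕ, k ≤ d ∧ d ≤ 2 * k - 1 ∧ i - j = (d : ZMod (3 * k - 1)))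

instance : NeZero (3 * 3 - 1) := ⟨by norm_num⟩

lemma wag_adj_iff (i j : ZMod (3 * 3 - 1)) :
    (andrasfai 3).Adj i j ↔ (i ≠ j ∧ (i - j = 3 ∨ i - j = 4 ∨ i - j = 5 ∨
      j - i = 3 ∨ j - i = 4 ∨ j - i = 5)) := by
  unfold andrasfai
  rw [SimpleGraph.fromRel_adj]
  constructor
  · rintro ⟨hne, h | h⟩ <;> obtain ⟨d, hd1, hd2, hd3⟩ := h <;> refine ⟨hne, ?_⟩ <;>
      [skip; skip] <;> {
        have : d = 3 ∨ d = 4 ∨ d = 5 := by omega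
        rcases this with rfl | rfl | rfl <;> push_cast at hd3 <;> tauto }
  · rintro ⟨hne, h⟩
    refine ⟨hne, ?_⟩
    rcases h with h|h|h|h|h|h
    · exact Or.inl ⟨3, by norm_num, by norm_num, by push_cast; exact h⟩
    · exact Or.inl ⟨4, by norm_num, by norm_num, by push_cast; exact h⟩
    · exact Or.inl ⟨5, by norm_num, by norm_num, by push_cast; exact h⟩
    · exact Or.inr ⟨3, by norm_num, by norm_num, by push_cast; exact h⟩
    · exact Or.inr ⟨4, by norm_num, by norm_num, by push_cast; exact h⟩
    · exact Or.inr ⟨5, by norm_num, by norm_num, by push_cast; exact h⟩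

lemma wagA1 (y : ZMod (3 * 3 - 1)) : (andrasfai 3).Adj y (y+3) ∧ (andrasfai 3).Adj y (y+4) ∧
    (andrasfai 3).Adj y (y+5) := by
  simp only [wag_adj_iff]; revert y; decide

lemma wagA2 (y : ZMod (3 * 3 - 1)) : (y+3 ≠ y+4) ∧ (y+3 ≠ y+5) ∧ (y+4 ≠ y+5) ∧
    ¬(andrasfai 3).Adj (y+3) (y+4) ∧ ¬(andrasfai 3).Adj (y+3) (y+5) ∧
    ¬(andrasfai 3).Adj (y+4) (y+5) := by
  simp only [wag_adj_iff]; revert y; decide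

lemma wagA3 (a b : ZMod (3 * 3 - 1)) (hab : a ≠ b) (h : ¬(andrasfai 3).Adj a b) :
    ∃ y, y ≠ a ∧ y ≠ b ∧ ¬(andrasfai 3).Adj y a ∧ ¬(andrasfai 3).Adj y b := by
  revert hab h
  simp only [wag_adj_iff]
  revert a b; decide

lemma wag_card : Fintype.card (ZMod (3 * 3 - 1)) = 8 := by
  rw [ZMod.card]

open Finset in
open scoped Classical in
/-- if `4n/11 < s < 3n/8` and some extremal graph `G` (triangle-free,
`n` vertices, `α(G) ≤ s`, `e(G) = ex(n,s)`) contains a `Γ_3`-mould, then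
`ex(n,s) ≤ 6n² - 32ns + 44s²`. -/
theorem stmt_8 (n s : ℕ) (h1 : 4 * n < 11 * s) (h2 : 8 * s < 3 * n)
    (G : SimpleGraph (Fin n))
    (htf : G.CliqueFree 3)
    (hα : ∀ t : Finset (Fin n), IsIndep G t → t.card ≤ s)
    (hex : G.edgeFinset.card = exRT n s)
    (φ ψ : ZMod (3 * 3 - 1) → Finset (Fin n))
    (hφinj : Function.Injective φ)
    (hφind : ∀ x, IsIndep G (φ x) ∧ (φ x).card = s)
    (hφadj : ∀ x y, x ≠ y → (Disjoint (φ x) (φ y) ↔ (andrasfai 3).Adj x y))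
    (hψind : ∀ x, IsIndep G (ψ x) ∧ (ψ x).card = 3 * s - n)
    (hψN : ∀ x, ∀ z ∈ ψ x, G.neighborFinset z = φ x) :
    (exRT n s : ℤ) ≤ 6 * n ^ 2 - 32 * n * s + 44 * s ^ 2 := by
  have hn3s : n ≤ 3 * s := by omega
  set t' : ℕ := 3 * s - n with ht'
  have h3t's : 3 * t' ≤ s := by omega
  -- neighborhoods are independent (triangle-freeness)
  have L6 : ∀ v : Fin n, IsIndep G (G.neighborFinset v) := by
    intro v x hx y hy hxy hadj
    rw [SimpleGraph.mem_neighborFinset] at hx hy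
    exact htf {v, x, y} (SimpleGraph.is3Clique_triple_iff.mpr ⟨hx, hy, hadj⟩)
  have L0 : ∀ v : Fin n, (G.neighborFinset v).card ≤ s := fun v => hα _ (L6 v)
  -- reformulation of hψN via membership
  have hψN' : ∀ x, ∀ z ∈ ψ x, ∀ w, G.Adj z w ↔ w ∈ φ x := by
    intro x z hz w
    rw [← hψN x z hz, SimpleGraph.mem_neighborFinset]
  have hNz : ∀ x, ∀ z ∈ ψ x, G.neighborFinset z = φ x := by
    intro x z hz
    ext w
    rw [SimpleGraph.mem_neighborFinset]
    exact hψN' x z hz w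
  -- ψ's are pairwise disjoint
  have L1 : ∀ x y : ZMod (3 * 3 - 1), x ≠ y → Disjoint (ψ x) (ψ y) := by
    intro x y hxy
    rw [Finset.disjoint_left]
    intro z hzx hzy
    exact hxy (hφinj (by rw [← hψN x z hzx, ← hψN y z hzy]))
  -- member of ψ x is not in φ x
  have L2 : ∀ x, ∀ z ∈ ψ x, z ∉ φ x := by
    intro x z hz hzφ
    exact G.irrefl ((hψN' x z hz z).mpr hzφ)
  -- ψ x meets φ y only if x ~ y
  have L3 : ∀ x y, ∀ z ∈ ψ x, z ∈ φ y → (andrasfai 3).Adj x y := by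
    intro x y z hz hzy
    by_contra hadj
    have hxy : x ≠ y := by rintro rfl; exact L2 x z hz hzy
    have hnd : ¬ Disjoint (φ x) (φ y) := fun hd => hadj ((hφadj x y hxy).mp hd)
    obtain ⟨w, hwx, hwy⟩ := Finset.not_disjoint_iff.mp hnd
    have hwz : w ≠ z := fun h => L2 x z hz (h ▸ hwx)
    exact (hφind y).1 z hzy w hwy (Ne.symm hwz) ((hψN' x z hz w).mpr hwx)
  -- ψ y ⊆ φ x whenever x ~ y
  have L4 : ∀ x y, (andrasfai 3).Adj x y → ψ y ⊆ φ x := by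
    intro x y hadj
    have hxy := hadj.ne
    have hdisj : Disjoint (φ x) (φ y) := (hφadj x y hxy).mpr hadj
    have hind : IsIndep G (φ x ∪ ψ y) := by
      intro u hu v hv huv hadj'
      rcases Finset.mem_union.mp hu with hu | hu <;> rcases Finset.mem_union.mp hv with hv | hv
      · exact (hφind x).1 u hu v hv huv hadj'
      · exact Finset.disjoint_left.mp hdisj hu ((hψN' y v hv u).mp hadj'.symm)
      · exact Finset.disjoint_left.mp hdisj hv ((hψN' y u hu v).mp hadj')
      · exact (hψind y).1 u hu v hv huv hadj'
    have hEq : φ x = φ x ∪ ψ y :=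
      Finset.eq_of_subset_of_card_le Finset.subset_union_left
        (by rw [(hφind x).2]; exact hα _ hind)
    intro z hz
    rw [hEq]
    exact Finset.mem_union_right _ hz
  -- the big union Ψ and the outside Q
  set Ψ : Finset (Fin n) := Finset.univ.biUnion ψ with hΨdef
  have hΨcard : Ψ.card = 8 * t' := by
    rw [hΨdef, Finset.card_biUnion (fun x _ y _ hxy => L1 x y hxy)]
    simp only [(hψind _).2]
    rw [Finset.sum_const, Finset.card_univ, wag_card, smul_eq_mul, ht']
  set Q : Finset (Fin n) := Finset.univ \ Ψ with hQdef
  have hQcard : Q.card = n - 8 * t' := by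
    rw [hQdef, Finset.card_sdiff_of_subset (Finset.subset_univ Ψ), hΨcard, Finset.card_univ,
      Fintype.card_fin]
  -- the counter k
  set k : Fin n → ℕ := fun q => (Finset.univ.filter (fun x => q ∈ φ x)).card with hk
  -- N(q) ∩ Ψ has size t' * k q
  have hNΨ : ∀ q : Fin n, G.neighborFinset q ∩ Ψ =
      (Finset.univ.filter (fun x => q ∈ φ x)).biUnion ψ := by
    intro q
    ext z
    simp only [Finset.mem_inter, Finset.mem_biUnion, Finset.mem_filter, Finset.mem_univ,
      true_and, hΨdef, SimpleGraph.mem_neighborFinset]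
    constructor
    · rintro ⟨hadj, x, hz⟩
      exact ⟨x, (hψN' x z hz q).mp hadj.symm, hz⟩
    · rintro ⟨x, hqφ, hz⟩
      exact ⟨((hψN' x z hz q).mpr hqφ).symm, x, hz⟩
  have hNΨcard : ∀ q : Fin n, (G.neighborFinset q ∩ Ψ).card = k q * t' := by
    intro q
    rw [hNΨ q, Finset.card_biUnion (fun x _ y _ hxy => L1 x y hxy)]
    simp only [(hψind _).2]
    rw [Finset.sum_const, smul_eq_mul, hk]
  -- degree split
  have hde : ∀ q : Fin n, (G.neighborFinset q).card =
      (G.neighborFinset q ∩ Ψ).card + (G.neighborFinset q \ Ψ).card := by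
    intro q
    rw [add_comm, Finset.card_sdiff_add_card_inter]
  -- the part of N(q) outside Ψ is inside Q \ {q}
  have hrsub : ∀ q ∈ Q, G.neighborFinset q \ Ψ ⊆ Q \ {q} := by
    intro q hq z hz
    rw [Finset.mem_sdiff] at hz
    rw [Finset.mem_sdiff, Finset.mem_singleton]
    refine ⟨by rw [hQdef]; exact Finset.mem_sdiff.mpr ⟨Finset.mem_univ _, hz.2⟩, ?_⟩
    rintro rfl
    exact G.irrefl ((SimpleGraph.mem_neighborFinset _ _ _).mp hz.1)
  -- the key bound in the case k q = 2
  have key2 : ∀ q ∈ Q, k q = 2 → (G.neighborFinset q).card + 4 * t' ≤ 2 * s := by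
    intro q hq hk2
    obtain ⟨a, b, hab, hSq⟩ := Finset.card_eq_two.mp hk2
    have hmemS : ∀ c : ZMod (3 * 3 - 1), q ∈ φ c ↔ (c = a ∨ c = b) := by
      intro c
      constructor
      · intro h
        have hc : c ∈ Finset.univ.filter (fun x => q ∈ φ x) :=
          Finset.mem_filter.mpr ⟨Finset.mem_univ _, h⟩
        rw [hSq] at hc
        simpa using hc
      · intro hca
        have hc : c ∈ ({a, b} : Finset (ZMod (3 * 3 - 1))) := by
          rcases hca with rfl | rfl <;> simp
        rw [← hSq] at hc
        exact (Finset.mem_filter.mp hc).2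
    have hqa : q ∈ φ a := (hmemS a).mpr (Or.inl rfl)
    have hqb : q ∈ φ b := (hmemS b).mpr (Or.inr rfl)
    have hnadj : ¬ (andrasfai 3).Adj a b := by
      intro h
      exact Finset.disjoint_left.mp ((hφadj a b hab).mpr h) hqa hqb
    obtain ⟨y, hya, hyb, hyadja, hyadjb⟩ := wagA3 a b hab hnadj
    have hqy : q ∉ φ y := by
      intro h
      rcases (hmemS y).mp h with rfl | rfl
      · exact hya rfl
      · exact hyb rfl
    obtain ⟨hA3, hA4, hA5⟩ := wagA1 y
    obtain ⟨hne34, hne35, hne45, hnadj34, hnadj35, hnadj45⟩ := wagA2 y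
    -- q is not in φ of the three neighbours of y
    have hqc : ∀ c : ZMod (3 * 3 - 1), (andrasfai 3).Adj y c → q ∉ φ c := by
      intro c hyc h
      rcases (hmemS c).mp h with rfl | rfl
      · exact hyadja hyc
      · exact hyadjb hyc
    -- first independent set: (N q \ φ y) ∪ ψ y
    have hI1 : IsIndep G ((G.neighborFinset q \ φ y) ∪ ψ y) := by
      intro u hu v hv huv hadj'
      rcases Finset.mem_union.mp hu with hu | hu <;> rcases Finset.mem_union.mp hv with hv | hv
      · exact L6 q u (Finset.mem_sdiff.mp hu).1 v (Finset.mem_sdiff.mp hv).1 huv hadj'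
      · exact (Finset.mem_sdiff.mp hu).2 ((hψN' y v hv u).mp hadj'.symm)
      · exact (Finset.mem_sdiff.mp hv).2 ((hψN' y u hu v).mp hadj')
      · exact (hψind y).1 u hu v hv huv hadj'
    have hd1 : Disjoint (G.neighborFinset q \ φ y) (ψ y) := by
      rw [Finset.disjoint_right]
      intro z hz hz2
      have hadj := (SimpleGraph.mem_neighborFinset _ _ _).mp (Finset.mem_sdiff.mp hz2).1
      exact hqy ((hψN' y z hz q).mp hadj.symm)
    have hA : (G.neighborFinset q \ φ y).card + t' ≤ s := by
      have := hα _ hI1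
      rwa [Finset.card_union_of_disjoint hd1, (hψind y).2] at this
    -- second independent set: W ∪ ψ (y+3) ∪ ψ (y+4) ∪ ψ (y+5)
    set W : Finset (Fin n) := G.neighborFinset q ∩ φ y with hW
    -- cross facts
    have hWφ : ∀ w ∈ W, w ∈ φ y := fun w hw => (Finset.mem_inter.mp hw).2
    have hWN : ∀ w ∈ W, w ∈ G.neighborFinset q := fun w hw => (Finset.mem_inter.mp hw).1
    have hcross1 : ∀ c, (andrasfai 3).Adj y c → ∀ w ∈ W, ∀ z ∈ ψ c, ¬ G.Adj w z := by
      intro c hyc w hw z hz hadj'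
      have hwφc : w ∈ φ c := (hψN' c z hz w).mp hadj'.symm
      exact Finset.disjoint_left.mp ((hφadj y c hyc.ne).mpr hyc) (hWφ w hw) hwφc
    have hcross2 : ∀ c c', ¬(andrasfai 3).Adj c' c → ∀ z ∈ ψ c, ∀ z' ∈ ψ c',
        ¬ G.Adj z z' := by
      intro c c' hnadj z hz z' hz' hadj'
      exact hnadj (L3 c' c z' hz' ((hψN' c z hz z').mp hadj'))
    have hWdisj : ∀ c, (andrasfai 3).Adj y c → Disjoint W (ψ c) := by
      intro c hyc
      rw [Finset.disjoint_left]
      intro w hw hwc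
      have hadj := (SimpleGraph.mem_neighborFinset _ _ _).mp (hWN w hw)
      exact hqc c hyc ((hψN' c w hwc q).mp hadj.symm)
    have hI2 : IsIndep G (W ∪ (ψ (y+3) ∪ (ψ (y+4) ∪ ψ (y+5)))) := by
      intro u hu v hv huv hadj'
      have hmem : ∀ w, w ∈ W ∪ (ψ (y+3) ∪ (ψ (y+4) ∪ ψ (y+5))) →
          w ∈ W ∨ ∃ c, (andrasfai 3).Adj y c ∧ w ∈ ψ c := by
        intro w hw
        rcases Finset.mem_union.mp hw with hw | hw
        · exact Or.inl hw
        rcases Finset.mem_union.mp hw with hw | hw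
        · exact Or.inr ⟨y+3, hA3, hw⟩
        rcases Finset.mem_union.mp hw with hw | hw
        · exact Or.inr ⟨y+4, hA4, hw⟩
        · exact Or.inr ⟨y+5, hA5, hw⟩
      rcases hmem u hu with hu' | ⟨c, hyc, hu'⟩ <;> rcases hmem v hv with hv' | ⟨c', hyc', hv'⟩
      · exact L6 q u (hWN u hu') v (hWN v hv') huv hadj'
      · exact hcross1 c' hyc' u hu' v hv' hadj'
      · exact hcross1 c hyc v hv' u hu' hadj'.symm
      · by_cases hcc : c = c'
        · subst hcc
          exact (hψind c).1 u hu' v hv' huv hadj'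
        · -- c ≠ c', both adjacent to y, so c' not adjacent to c
          have hnadjcc : ¬ (andrasfai 3).Adj c' c := by
            intro hadjcc
            -- c, c' ∈ {y+3,y+4,y+5}; all pairs nonadjacent
            have hzsub : ∀ (u v d e : ZMod (3 * 3 - 1)), -d = e → u - v = d → v = u + e := by
              intro u v d e hde h
              rw [← hde]
              linear_combination -h
            have hzadd : ∀ (u v d : ZMod (3 * 3 - 1)), v - u = d → v = u + d := by
              intro u v d h
              linear_combination h
            have hcset : c = y+3 ∨ c = y+4 ∨ c = y+5 := by
              rcases (wag_adj_iff y c).mp hyc with ⟨-, h⟩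
              rcases h with h|h|h|h|h|h
              · exact Or.inr (Or.inr (hzsub y c 3 5 (by decide) h))
              · exact Or.inr (Or.inl (hzsub y c 4 4 (by decide) h))
              · exact Or.inl (hzsub y c 5 3 (by decide) h)
              · exact Or.inl (hzadd y c 3 h)
              · exact Or.inr (Or.inl (hzadd y c 4 h))
              · exact Or.inr (Or.inr (hzadd y c 5 h))
            have hcset' : c' = y+3 ∨ c' = y+4 ∨ c' = y+5 := by
              rcases (wag_adj_iff y c').mp hyc' with ⟨-, h⟩
              rcases h with h|h|h|h|h|h
              · exact Or.inr (Or.inr (hzsub y c' 3 5 (by decide) h))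
              · exact Or.inr (Or.inl (hzsub y c' 4 4 (by decide) h))
              · exact Or.inl (hzsub y c' 5 3 (by decide) h)
              · exact Or.inl (hzadd y c' 3 h)
              · exact Or.inr (Or.inl (hzadd y c' 4 h))
              · exact Or.inr (Or.inr (hzadd y c' 5 h))
            rcases hcset with rfl|rfl|rfl <;> rcases hcset' with rfl|rfl|rfl <;>
              first
                | exact hcc rfl
                | exact hnadj34 hadjcc.symm
                | exact hnadj34 hadjcc
                | exact hnadj35 hadjcc.symm
                | exact hnadj35 hadjcc
                | exact hnadj45 hadjcc.symm
                | exact hnadj45 hadjcc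
          exact hcross2 c c' hnadjcc u hu' v hv' hadj'
    have hB : W.card + 3 * t' ≤ s := by
      have hcard := hα _ hI2
      have hd45 : Disjoint (ψ (y+4)) (ψ (y+5)) := L1 _ _ hne45
      have hd345 : Disjoint (ψ (y+3)) (ψ (y+4) ∪ ψ (y+5)) := by
        rw [Finset.disjoint_union_right]
        exact ⟨L1 _ _ hne34, L1 _ _ hne35⟩
      have hdW : Disjoint W (ψ (y+3) ∪ (ψ (y+4) ∪ ψ (y+5))) := by
        rw [Finset.disjoint_union_right, Finset.disjoint_union_right]
        exact ⟨hWdisj _ hA3, hWdisj _ hA4, hWdisj _ hA5⟩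
      rw [Finset.card_union_of_disjoint hdW, Finset.card_union_of_disjoint hd345,
        Finset.card_union_of_disjoint hd45, (hψind _).2, (hψind _).2, (hψind _).2] at hcard
      omega
    -- combine
    have hsplit : (G.neighborFinset q).card =
        (G.neighborFinset q \ φ y).card + W.card := by
      rw [hW]
      exact (Finset.card_sdiff_add_card_inter _ _).symm
    omega
  -- pointwise degree bound for q ∈ Q
  have hpoint : ∀ q ∈ Q, ((G.neighborFinset q).card : ℤ) ≤
      (3*(s:ℤ) - n) * (k q : ℤ) + (3*(n:ℤ) - 8*s) * (4 - (k q : ℤ)) := by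
    intro q hq
    have hdq := hde q
    have hiq := hNΨcard q
    have hQpos : 1 ≤ Q.card := Finset.card_pos.mpr ⟨q, hq⟩
    have hrq : (G.neighborFinset q \ Ψ).card ≤ Q.card - 1 := by
      have := Finset.card_le_card (hrsub q hq)
      rwa [Finset.card_sdiff_of_subset (Finset.singleton_subset_iff.mpr hq),
        Finset.card_singleton] at this
    rcases Nat.lt_or_ge (k q) 2 with hk1 | hk2
    · have hk01 : k q = 0 ∨ k q = 1 := by omega
      rcases hk01 with h | h <;> rw [h] at hiq ⊢ <;> push_cast <;> omega
    rcases Nat.lt_or_ge (k q) 3 with hk2' | hk3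
    · have hk2e : k q = 2 := by omega
      have := key2 q hq hk2e
      rw [hk2e]
      push_cast
      omega
    · -- k q ≥ 3 : use deg ≤ s
      have hdeg := L0 q
      have e1 : (0:ℤ) ≤ (k q : ℤ) - 3 := by push_cast; omega
      have e2 : (0:ℤ) ≤ (3*(s:ℤ) - n) - (3*(n:ℤ) - 8*s) := by push_cast; omega
      have hprod := mul_nonneg e1 e2
      have hid : (3*(s:ℤ) - n) * (k q : ℤ) + (3*(n:ℤ) - 8*s) * (4 - (k q : ℤ)) =
          (s:ℤ) + ((k q : ℤ) - 3) * ((3*(s:ℤ) - n) - (3*(n:ℤ) - 8*s)) := by ring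
      rw [hid]
      have : ((G.neighborFinset q).card : ℤ) ≤ (s:ℤ) := by exact_mod_cast hdeg
      linarith
  -- total of k over Q
  have hSumQk : ∑ q ∈ Q, k q ≤ 8 * (s - 3 * t') := by
    have hswap : ∑ q ∈ Q, k q = ∑ x : ZMod (3 * 3 - 1), (φ x \ Ψ).card := by
      calc ∑ q ∈ Q, k q
          = ∑ q ∈ Q, ∑ x : ZMod (3 * 3 - 1), if q ∈ φ x then 1 else 0 := by
            apply Finset.sum_congr rfl
            intro q _
            rw [hk]
            exact Finset.card_filter _ _
        _ = ∑ x : ZMod (3 * 3 - 1), ∑ q ∈ Q, if q ∈ φ x then 1 else 0 := Finset.sum_comm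
        _ = ∑ x : ZMod (3 * 3 - 1), (Q.filter (fun q => q ∈ φ x)).card := by
            apply Finset.sum_congr rfl
            intro x _
            exact (Finset.card_filter _ _).symm
        _ = ∑ x : ZMod (3 * 3 - 1), (φ x \ Ψ).card := by
            apply Finset.sum_congr rfl
            intro x _
            congr 1
            ext q
            simp only [Finset.mem_filter, Finset.mem_sdiff, hQdef, Finset.mem_univ, true_and]
            tauto
    have hper : ∀ x : ZMod (3 * 3 - 1), (φ x \ Ψ).card ≤ s - 3 * t' := by
      intro x
      obtain ⟨hA3, hA4, hA5⟩ := wagA1 x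
      obtain ⟨hne34, hne35, hne45, -, -, -⟩ := wagA2 x
      have hsub : ψ (x+3) ∪ (ψ (x+4) ∪ ψ (x+5)) ⊆ φ x ∩ Ψ := by
        intro z hz
        have hz' : z ∈ ψ (x+3) ∨ z ∈ ψ (x+4) ∨ z ∈ ψ (x+5) := by
          rcases Finset.mem_union.mp hz with h | h
          · exact Or.inl h
          rcases Finset.mem_union.mp h with h | h
          · exact Or.inr (Or.inl h)
          · exact Or.inr (Or.inr h)
        refine Finset.mem_inter.mpr ⟨?_, ?_⟩
        · rcases hz' with h | h | h
          · exact L4 x (x+3) hA3 h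
          · exact L4 x (x+4) hA4 h
          · exact L4 x (x+5) hA5 h
        · rw [hΨdef]
          rcases hz' with h | h | h
          · exact Finset.mem_biUnion.mpr ⟨x+3, Finset.mem_univ _, h⟩
          · exact Finset.mem_biUnion.mpr ⟨x+4, Finset.mem_univ _, h⟩
          · exact Finset.mem_biUnion.mpr ⟨x+5, Finset.mem_univ _, h⟩
      have hd45 : Disjoint (ψ (x+4)) (ψ (x+5)) := L1 _ _ hne45
      have hd345 : Disjoint (ψ (x+3)) (ψ (x+4) ∪ ψ (x+5)) := by
        rw [Finset.disjoint_union_right]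
        exact ⟨L1 _ _ hne34, L1 _ _ hne35⟩
      have hcard3 : (ψ (x+3) ∪ (ψ (x+4) ∪ ψ (x+5))).card = 3 * t' := by
        rw [Finset.card_union_of_disjoint hd345, Finset.card_union_of_disjoint hd45,
          (hψind _).2, (hψind _).2, (hψind _).2]
        omega
      have hle : 3 * t' ≤ (φ x ∩ Ψ).card := hcard3 ▸ Finset.card_le_card hsub
      have hx2 : (φ x \ Ψ).card + (φ x ∩ Ψ).card = s := by
        rw [Finset.card_sdiff_add_card_inter, (hφind x).2]
      omega
    calc ∑ q ∈ Q, k q = ∑ x : ZMod (3 * 3 - 1), (φ x \ Ψ).card := hswap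
      _ ≤ ∑ _x : ZMod (3 * 3 - 1), (s - 3 * t') := Finset.sum_le_sum (fun x _ => hper x)
      _ = 8 * (s - 3 * t') := by
          rw [Finset.sum_const, Finset.card_univ, wag_card, smul_eq_mul]
  -- sum of degrees over Ψ
  have hSumΨ : ∑ v ∈ Ψ, (G.neighborFinset v).card = 8 * (t' * s) := by
    rw [hΨdef, Finset.sum_biUnion (fun x _ y _ hxy => L1 x y hxy)]
    have : ∀ x : ZMod (3 * 3 - 1), ∑ z ∈ ψ x, (G.neighborFinset z).card = t' * s := by
      intro x
      have : ∀ z ∈ ψ x, (G.neighborFinset z).card = s := by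
        intro z hz
        rw [hNz x z hz, (hφind x).2]
      rw [Finset.sum_congr rfl this, Finset.sum_const, (hψind x).2, smul_eq_mul, ht']
    rw [Finset.sum_congr rfl (fun x _ => this x), Finset.sum_const, Finset.card_univ,
      wag_card, smul_eq_mul]
  -- sum split over univ
  have hsplitsum : ∑ v ∈ Q, (G.neighborFinset v).card + ∑ v ∈ Ψ, (G.neighborFinset v).card =
      ∑ v : Fin n, (G.neighborFinset v).card := by
    rw [hQdef]
    exact Finset.sum_sdiff (Finset.subset_univ Ψ)
  have htwice : ∑ v : Fin n, (G.neighborFinset v).card = 2 * G.edgeFinset.card := by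
    exact SimpleGraph.sum_degrees_eq_twice_card_edges G
  -- sum over Q, in ℤ
  have hQsum : (∑ v ∈ Q, ((G.neighborFinset v).card : ℤ)) ≤
      ((3*(s:ℤ) - n) - (3*(n:ℤ) - 8*s)) * (∑ q ∈ Q, (k q : ℤ)) +
        (Q.card : ℤ) * (4 * (3*(n:ℤ) - 8*s)) := by
    calc (∑ v ∈ Q, ((G.neighborFinset v).card : ℤ))
        ≤ ∑ q ∈ Q, ((3*(s:ℤ) - n) * (k q : ℤ) + (3*(n:ℤ) - 8*s) * (4 - (k q : ℤ))) :=
          Finset.sum_le_sum hpoint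
      _ = ∑ q ∈ Q, (((3*(s:ℤ) - n) - (3*(n:ℤ) - 8*s)) * (k q : ℤ) + 4 * (3*(n:ℤ) - 8*s)) := by
          apply Finset.sum_congr rfl
          intro q _
          ring
      _ = ((3*(s:ℤ) - n) - (3*(n:ℤ) - 8*s)) * (∑ q ∈ Q, (k q : ℤ)) +
          (Q.card : ℤ) * (4 * (3*(n:ℤ) - 8*s)) := by
          rw [Finset.sum_add_distrib, ← Finset.mul_sum, Finset.sum_const, nsmul_eq_mul]
  -- cast facts
  have hKcast : (∑ q ∈ Q, (k q : ℤ)) = ((∑ q ∈ Q, k q : ℕ) : ℤ) := by push_cast; rfl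
  have hKle : (∑ q ∈ Q, (k q : ℤ)) ≤ 8 * (3*(n:ℤ) - 8*s) := by
    rw [hKcast]
    have := hSumQk
    omega
  have hKpos : (0:ℤ) ≤ ∑ q ∈ Q, (k q : ℤ) := by
    rw [hKcast]; exact Int.natCast_nonneg _
  have hTMpos : (0:ℤ) ≤ (3*(s:ℤ) - n) - (3*(n:ℤ) - 8*s) := by push_cast; omega
  have hQcast : (Q.card : ℤ) = 3 * (3*(n:ℤ) - 8*s) := by
    have := hQcard
    omega
  have hmul : ((3*(s:ℤ) - n) - (3*(n:ℤ) - 8*s)) * (∑ q ∈ Q, (k q : ℤ)) ≤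
      ((3*(s:ℤ) - n) - (3*(n:ℤ) - 8*s)) * (8 * (3*(n:ℤ) - 8*s)) :=
    mul_le_mul_of_nonneg_left hKle hTMpos
  -- final assembly
  rw [← hex]
  have hcast2 : ((∑ v ∈ Q, (G.neighborFinset v).card : ℕ) : ℤ) =
      ∑ v ∈ Q, ((G.neighborFinset v).card : ℤ) := by push_cast; rfl
  have htot : 2 * (G.edgeFinset.card : ℤ) =
      (∑ v ∈ Q, ((G.neighborFinset v).card : ℤ)) + 8 * ((t' : ℤ) * s) := by
    have h1' : ((∑ v ∈ Q, (G.neighborFinset v).card : ℕ) : ℤ) + 8 * ((t':ℤ) * s) =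
        2 * (G.edgeFinset.card : ℤ) := by
      have h := hsplitsum
      rw [hSumΨ, htwice] at h
      exact_mod_cast h
    rw [← hcast2]
    omega
  have ht'cast : (t' : ℤ) = 3*(s:ℤ) - n := by omega
  have hfinal : 2 * (G.edgeFinset.card : ℤ) ≤
      ((3*(s:ℤ) - n) - (3*(n:ℤ) - 8*s)) * (8 * (3*(n:ℤ) - 8*s)) +
        3 * (3*(n:ℤ) - 8*s) * (4 * (3*(n:ℤ) - 8*s)) + 8 * ((3*(s:ℤ) - n) * s) := by
    rw [htot, ht'cast]
    have := hQsum
    rw [hQcast] at this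
    linarith
  have hring : ((3*(s:ℤ) - n) - (3*(n:ℤ) - 8*s)) * (8 * (3*(n:ℤ) - 8*s)) +
      3 * (3*(n:ℤ) - 8*s) * (4 * (3*(n:ℤ) - 8*s)) + 8 * ((3*(s:ℤ) - n) * s) =
      2 * (6 * (n:ℤ) ^ 2 - 32 * n * s + 44 * s ^ 2) := by ring
  rw [hring] at hfinal
  linarith
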